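/- For every σ ∈ (0,1], F(σ) = τ(σ), where F is defined by the recurrence F(σ) = 1/2 for σ ≥ 1/4 and F(σ) = β + max{α·F(σ/α), (1-α)·F(σ/(1-α))} for σ < 1/4, with α = 1 - τ(σ) and β = α - σ. -/

import Mathlib

/-!
On `I_ℓ = (1/ρ_{ℓ+1}, 1/ρ_ℓ]` the function `τ` is the affine map `tauPiece ℓ`, and `F = τ` is proved
on `(1/ρ_{ℓ+1}, 1]` by induction on `ℓ`. Take `σ ∈ I_ℓ` with `ℓ ≥ 2`, `σ < 1/4`, and put
`t = τ σ = 1 - α`. The map `σ ↦ σ / t` sends `I_ℓ` into `I_{ℓ-1}`, and there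
`t · τ(σ/t) = 2t - 1 + σ` holds identically. The other argument `σ / α` lands in `(1/ρ_ℓ, 1]`,
where every affine piece satisfies `α · tauPiece m (σ/α) ≤ 2t - 1 + σ` (a polynomial inequality
in `ℓ`, `m`, affine in `σ`). So the maximum equals `2t - 1 + σ`, and `F σ = (1 - t - σ) + (2t - 1 + σ) = t`.
-/

/-- The "magic sequence" ρ_ℓ = 1 + ℓ(ℓ+1)/2, as a real number. -/
noncomputable def rho (l : ℕ) : ℝ := 1 + (l : ℝ) * ((l : ℝ) + 1) / 2

/-- `IsTau tau` expresses that `tau` is the tradeoff function of Dinur et al.: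
`tau σ = 1/2` for `σ > 1/2`, and `tau σ = 1 - 1/(ℓ+1) - σ(ρ_ℓ-2)/(ℓ+1)`
where `ℓ ≥ 1` is the unique integer with `1/ρ_{ℓ+1} < σ ≤ 1/ρ_ℓ`. -/
def IsTau (tau : ℝ → ℝ) : Prop :=
  (∀ σ : ℝ, 1 / 2 < σ → σ ≤ 1 → tau σ = 1 / 2) ∧
  (∀ σ : ℝ, 0 < σ → σ ≤ 1 / 2 → ∀ l : ℕ, 1 ≤ l →
    1 / rho (l + 1) < σ → σ ≤ 1 / rho l →
    tau σ = 1 - 1 / ((l : ℝ) + 1) - σ * (rho l - 2) / ((l : ℝ) + 1))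

/-- `IsF tau F` expresses the recurrence defining `F`:
`F σ = 1/2` for `σ ≥ 1/4`, and for `σ < 1/4`, with `α = 1 - tau σ` and
`β = α - σ`, `F σ = β + max (α·F(σ/α)) ((1-α)·F(σ/(1-α)))`. -/
def IsF (tau F : ℝ → ℝ) : Prop :=
  (∀ σ : ℝ, 1 / 4 ≤ σ → σ ≤ 1 → F σ = 1 / 2) ∧
  (∀ σ : ℝ, 0 < σ → σ < 1 / 4 →
    F σ = ((1 - tau σ) - σ) +
      max ((1 - tau σ) * F (σ / (1 - tau σ)))
          ((1 - (1 - tau σ)) * F (σ / (1 - (1 - tau σ)))))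

open Filter Set

lemma rho_pos (l : ℕ) : 0 < rho l := by
  unfold rho
  positivity

lemma rho_succ (l : ℕ) : rho (l + 1) = rho l + (l + 1) := by
  unfold rho
  push_cast
  ring

lemma rho_mono : Monotone rho :=
  monotone_nat_of_le_succ fun l ↦ by rw [rho_succ]; exact le_add_of_nonneg_right (by positivity)

lemma one_le_rho (l : ℕ) : 1 ≤ rho l := by
  unfold rho
  have : (0 : ℝ) ≤ l * (l + 1) / 2 := by positivity
  linarith

lemma rho_one : rho 1 = 2 := by norm_num [rho]

lemma rho_two : rho 2 = 4 := by norm_num [rho]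

lemma rho_three : rho 3 = 7 := by norm_num [rho]

lemma natCast_le_rho (l : ℕ) : (l : ℝ) ≤ rho l := by
  unfold rho
  nlinarith [sq_nonneg ((l : ℝ) - 1)]

lemma tendsto_rho : Tendsto rho atTop atTop :=
  tendsto_atTop_mono natCast_le_rho tendsto_natCast_atTop_atTop

lemma eventually_one_div_rho_lt {σ : ℝ} (hσ : 0 < σ) : ∀ᶠ l in atTop, 1 / rho l < σ := by
  simpa only [one_div, Function.comp_apply] using
    (tendsto_inv_atTop_zero.comp tendsto_rho).eventually (gt_mem_nhds hσ)

lemma exists_mem_Ioc_one_div_rho {σ : ℝ} (hσ : 0 < σ) (hσ' : σ ≤ 1 / 2) :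
    ∃ m, 1 ≤ m ∧ 1 / rho (m + 1) < σ ∧ σ ≤ 1 / rho m := by
  have hex := (eventually_one_div_rho_lt hσ).exists
  have two_le : 2 ≤ Nat.find hex := by
    refine (Nat.le_find_iff hex 2).2 fun n hn ↦ not_lt.2 ?_
    interval_cases n <;> norm_num [rho] <;> linarith
  refine ⟨Nat.find hex - 1, by omega, ?_, not_lt.1 (Nat.find_min hex (by omega))⟩
  rw [Nat.sub_add_cancel (by omega)]
  exact Nat.find_spec hex

noncomputable def tauPiece (l : ℕ) (σ : ℝ) : ℝ :=
  1 - 1 / ((l : ℝ) + 1) - σ * (rho l - 2) / ((l : ℝ) + 1)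

lemma tauPiece_one (σ : ℝ) : tauPiece 1 σ = 1 / 2 := by
  norm_num [tauPiece, rho_one]

lemma one_sub_tauPiece (l : ℕ) (σ : ℝ) :
    1 - tauPiece l σ = (1 + σ * (rho l - 2)) / ((l : ℝ) + 1) := by
  unfold tauPiece
  field_simp
  ring

lemma mul_tauPiece_div (l : ℕ) {s : ℝ} (hs : s ≠ 0) (σ : ℝ) :
    s * tauPiece l (σ / s) = (l * s - σ * (rho l - 2)) / ((l : ℝ) + 1) := by
  unfold tauPiece
  field_simp
  ring

lemma tauPiece_succ_sub_mul_rho (l : ℕ) (σ : ℝ) :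
    tauPiece (l + 1) σ - σ * rho l = (l + 1) / (l + 2) * (1 - σ * rho (l + 1)) := by
  unfold tauPiece rho
  push_cast
  field_simp
  ring

lemma mul_rho_sub_tauPiece (l : ℕ) (σ : ℝ) :
    σ * rho l - tauPiece l σ = l / (l + 1) * (σ * rho (l + 1) - 1) := by
  unfold tauPiece rho
  push_cast
  field_simp
  ring

lemma tauPiece_succ_mul_tauPiece_div (l : ℕ) {σ : ℝ} (ht : tauPiece (l + 1) σ ≠ 0) :
    tauPiece (l + 1) σ * tauPiece l (σ / tauPiece (l + 1) σ) = 2 * tauPiece (l + 1) σ - 1 + σ := by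
  rw [mul_tauPiece_div l ht]
  unfold tauPiece rho
  push_cast
  field_simp
  ring

lemma mapsTo_div_tauPiece (l : ℕ) :
    MapsTo (fun σ ↦ σ / tauPiece (l + 1) σ)
      (Ioc (1 / rho (l + 2)) (1 / rho (l + 1))) (Ioc (1 / rho (l + 1)) (1 / rho l)) := by
  rintro σ ⟨hlo, hhi⟩
  rw [div_lt_iff₀ (rho_pos _)] at hlo
  rw [le_div_iff₀ (rho_pos _)] at hhi
  have hσ : 0 < σ := pos_of_mul_pos_left (one_pos.trans hlo) (rho_pos _).le
  have hle : σ * rho l ≤ tauPiece (l + 1) σ := by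
    have hgap : 0 ≤ ((l : ℝ) + 1) / (l + 2) * (1 - σ * rho (l + 1)) :=
      mul_nonneg (by positivity) (by linarith)
    linarith [tauPiece_succ_sub_mul_rho l σ]
  have hlt : tauPiece (l + 1) σ < σ * rho (l + 1) := by
    have hgap : 0 < ((l + 1 : ℕ) : ℝ) / ((l + 1 : ℕ) + 1) * (σ * rho (l + 1 + 1) - 1) :=
      mul_pos (by positivity) (by linarith)
    linarith [mul_rho_sub_tauPiece (l + 1) σ]
  have ht : 0 < tauPiece (l + 1) σ := (mul_pos hσ (rho_pos l)).trans_le hle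
  exact ⟨(div_lt_div_iff₀ (rho_pos _) ht).2 (by linarith),
    (div_le_div_iff₀ ht (rho_pos _)).2 (by linarith)⟩

lemma one_sub_tauPiece_add_two_pos (l : ℕ) {σ : ℝ} (hσ : 0 ≤ σ) : 0 < 1 - tauPiece (l + 2) σ := by
  rw [one_sub_tauPiece]
  have h2 : rho 1 ≤ rho (l + 2) := rho_mono (by omega)
  rw [rho_one] at h2
  have : 0 ≤ σ * (rho (l + 2) - 2) := mul_nonneg hσ (by linarith)
  positivity

lemma mapsTo_div_one_sub_tauPiece (l : ℕ) :
    MapsTo (fun σ ↦ σ / (1 - tauPiece (l + 2) σ))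
      (Ioc (1 / rho (l + 3)) 1) (Ioc (1 / rho (l + 2)) 1) := by
  rintro σ ⟨hlo, hhi⟩
  rw [div_lt_iff₀ (rho_pos _)] at hlo
  have hσ : 0 < σ := pos_of_mul_pos_left (one_pos.trans hlo) (rho_pos _).le
  have hs := one_sub_tauPiece_add_two_pos l hσ.le
  have hs_eq := one_sub_tauPiece (l + 2) σ
  have hρ : rho (l + 3) = rho (l + 2) + (l + 3) := by rw [rho_succ]; push_cast; ring
  have hρ2 : rho (l + 2) = 1 + (l + 2) * (l + 3) / 2 := by unfold rho; push_cast; ring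
  push_cast at hs_eq
  refine ⟨(div_lt_div_iff₀ (rho_pos _) hs).2 ?_, (div_le_one hs).2 ?_⟩
  · -- `(l + 3) (σ ρ_{l+2} - (1 - t)) = (σ ρ_{l+3} - 1) + (l + 1) σ (ρ_{l+2} - 1)`, `t = tauPiece (l + 2) σ`
    rw [hs_eq, one_mul, div_lt_iff₀ (by positivity)]
    rw [hρ] at hlo
    have : (0 : ℝ) ≤ rho (l + 2) - 1 := by rw [hρ2, add_sub_cancel_left]; positivity
    nlinarith [mul_nonneg (mul_nonneg hσ.le (by positivity : (0 : ℝ) ≤ l + 1)) this]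
  · rw [hs_eq, le_div_iff₀ (by positivity), hρ2]
    nlinarith [mul_nonneg (mul_nonneg hσ.le (Nat.cast_nonneg l)) (Nat.cast_nonneg l)]

lemma one_sub_tauPiece_mul_tauPiece_div_le (l : ℕ) {m : ℕ} (hm : 1 ≤ m) {σ : ℝ} (hσ : 0 ≤ σ)
    (hσl : σ ≤ 1 / rho (l + 2)) :
    (1 - tauPiece (l + 2) σ) * tauPiece m (σ / (1 - tauPiece (l + 2) σ)) ≤
      2 * tauPiece (l + 2) σ - 1 + σ := by
  set t := tauPiece (l + 2) σ with ht
  have hs := one_sub_tauPiece_add_two_pos l hσ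
  rw [le_div_iff₀ (rho_pos _)] at hσl
  rw [mul_tauPiece_div m hs.ne', div_le_iff₀ (by positivity)]
  have hl : (l : ℝ) ≤ l ^ 2 := by exact_mod_cast Nat.le_self_pow two_ne_zero l
  have hm' : (1 : ℝ) ≤ m := by exact_mod_cast hm
  have hQ : 0 ≤ ((m : ℝ) + 1) * (l ^ 2 - l) + 2 * l + m * (m - 1) := by
    have := mul_nonneg (by positivity : (0 : ℝ) ≤ m + 1) (sub_nonneg.2 hl)
    nlinarith
  -- the gap is affine in `σ`, nonnegative at `σ = 0` and at `σ = 1 / ρ_{l+2}`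
  have key : ((l : ℝ) + 3) * ((2 * t - 1 + σ) * (m + 1) - (m * (1 - t) - σ * (rho m - 2))) =
      (1 - σ * rho (l + 2)) * (l * (m + 1) + 1) +
        σ * (l + 3) * (((m : ℝ) + 1) * (l ^ 2 - l) + 2 * l + m * (m - 1)) / 2 := by
    rw [ht]
    unfold tauPiece rho
    push_cast
    field_simp
    ring
  have hgap : 0 ≤ (1 - σ * rho (l + 2)) * (l * (m + 1) + 1) +
      σ * (l + 3) * (((m : ℝ) + 1) * (l ^ 2 - l) + 2 * l + m * (m - 1)) / 2 := by
    have := mul_nonneg (sub_nonneg.2 hσl) (by positivity : (0 : ℝ) ≤ l * (m + 1) + 1)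
    have := mul_nonneg (mul_nonneg hσ (by positivity : (0 : ℝ) ≤ l + 3)) hQ
    linarith
  rw [← key] at hgap
  linarith [(mul_nonneg_iff_of_pos_left (by positivity : (0 : ℝ) < l + 3)).1 hgap]

lemma IsTau.eq_tauPiece {tau : ℝ → ℝ} (htau : IsTau tau) {l : ℕ} (hl : 1 ≤ l) {σ : ℝ}
    (hσ : σ ∈ Ioc (1 / rho (l + 1)) (1 / rho l)) : tau σ = tauPiece l σ := by
  have hσ0 : 0 < σ := (one_div_pos.2 (rho_pos _)).trans hσ.1
  have hσ2 : σ ≤ 1 / 2 := by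
    refine hσ.2.trans (one_div_le_one_div_of_le two_pos ?_)
    rw [← rho_one]
    exact rho_mono hl
  exact htau.2 σ hσ0 hσ2 l hl hσ.1 hσ.2

lemma IsTau.exists_eq_tauPiece {tau : ℝ → ℝ} (htau : IsTau tau) {σ : ℝ} (h0 : 0 < σ)
    (h1 : σ ≤ 1) : ∃ m, 1 ≤ m ∧ tau σ = tauPiece m σ := by
  rcases le_or_gt σ (1 / 2) with hσ | hσ
  · obtain ⟨m, hm, hlo, hhi⟩ := exists_mem_Ioc_one_div_rho h0 hσ
    exact ⟨m, hm, htau.eq_tauPiece hm ⟨hlo, hhi⟩⟩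
  · exact ⟨1, le_rfl, by rw [htau.1 σ hσ h1, tauPiece_one]⟩

lemma IsTau.eq_half {tau : ℝ → ℝ} (htau : IsTau tau) {σ : ℝ} (h0 : 1 / 4 ≤ σ) (h1 : σ ≤ 1) :
    tau σ = 1 / 2 := by
  rcases h0.eq_or_lt with rfl | h0
  · rw [htau.eq_tauPiece (l := 2) one_le_two ⟨by norm_num [rho_three], by norm_num [rho_two]⟩]
    norm_num [tauPiece, rho_two]
  rcases le_or_gt σ (1 / 2) with hσ | hσ
  · rw [htau.eq_tauPiece le_rfl ⟨by rwa [rho_two], by rwa [rho_one]⟩, tauPiece_one]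
  · exact htau.1 σ hσ h1

lemma IsF.eq_tau_of_quarter_le {tau F : ℝ → ℝ} (hF : IsF tau F) (htau : IsTau tau) {σ : ℝ}
    (h0 : 1 / 4 ≤ σ) (h1 : σ ≤ 1) : F σ = tau σ :=
  (hF.1 σ h0 h1).trans (htau.eq_half h0 h1).symm

lemma IsF.eq_tau_of_mem_Ioc {tau F : ℝ → ℝ} (hF : IsF tau F) (htau : IsTau tau) {l : ℕ}
    (ih : ∀ x ∈ Ioc (1 / rho (l + 2)) 1, F x = tau x) {σ : ℝ}
    (hσ : σ ∈ Ioc (1 / rho (l + 3)) (1 / rho (l + 2))) (hq : σ < 1 / 4) : F σ = tau σ := by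
  have hσ0 : 0 < σ := (one_div_pos.2 (rho_pos _)).trans hσ.1
  set t := tauPiece (l + 2) σ
  have htσ : tau σ = t := htau.eq_tauPiece (by omega) hσ
  have hlow := mapsTo_div_tauPiece (l + 1) hσ
  have hhigh := mapsTo_div_one_sub_tauPiece l ⟨hσ.1, by linarith⟩
  have ht : 0 < t := (div_pos_iff_of_pos_left hσ0).1 ((one_div_pos.2 (rho_pos _)).trans hlow.1)
  have h_low : t * F (σ / t) = 2 * t - 1 + σ := by
    rw [ih _ ⟨hlow.1, hlow.2.trans (div_le_one_of_le₀ (one_le_rho _) (rho_pos _).le)⟩,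
      htau.eq_tauPiece (by omega) hlow, tauPiece_succ_mul_tauPiece_div (l + 1) ht.ne']
  have h_high : (1 - t) * F (σ / (1 - t)) ≤ 2 * t - 1 + σ := by
    obtain ⟨m, hm, hτ⟩ := htau.exists_eq_tauPiece
      (div_pos hσ0 (one_sub_tauPiece_add_two_pos l hσ0.le)) hhigh.2
    rw [ih _ hhigh, hτ]
    exact one_sub_tauPiece_mul_tauPiece_div_le l hm hσ0.le hσ.2
  rw [hF.2 σ hσ0 hq, htσ, sub_sub_cancel, max_eq_right (h_high.trans h_low.ge), h_low]
  ring

lemma IsF.eq_tau_of_one_div_rho_lt {tau F : ℝ → ℝ} (hF : IsF tau F) (htau : IsTau tau) (l : ℕ) :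
    ∀ σ ∈ Ioc (1 / rho (l + 2)) 1, F σ = tau σ := by
  induction l with
  | zero =>
    rintro σ ⟨hlo, hhi⟩
    exact hF.eq_tau_of_quarter_le htau (by simpa [rho_two] using hlo.le) hhi
  | succ l ih =>
    rintro σ ⟨hlo, hhi⟩
    by_cases hσ : 1 / rho (l + 2) < σ
    · exact ih σ ⟨hσ, hhi⟩
    by_cases hq : 1 / 4 ≤ σ
    · exact hF.eq_tau_of_quarter_le htau hq hhi
    exact hF.eq_tau_of_mem_Ioc htau ih ⟨hlo, not_lt.1 hσ⟩ (not_le.1 hq)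

theorem F_eq_tau (tau F : ℝ → ℝ) (htau : IsTau tau) (hF : IsF tau F)
    (σ : ℝ) (h0 : 0 < σ) (h1 : σ ≤ 1) : F σ = tau σ := by
  obtain ⟨l, hl⟩ := ((tendsto_add_atTop_nat 2).eventually (eventually_one_div_rho_lt h0)).exists
  exact hF.eq_tau_of_one_div_rho_lt htau l σ ⟨hl, h1⟩
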